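/- Let $z: [0,2\pi] \to \mathbb{R}^2$ be a $C^2$ curve with $z_\phi(\phi) \neq 0$ for all $\phi$, and let $\nu = z_\phi^\perp / |z_\phi^\perp|$ where $(a,b)^\perp := (b,-a)$. Let $u: \mathbb{R}^2 \to \mathbb{C}$ be $C^2$ and define $G(z)(\phi) := \nu(\phi)\cdot\nabla u(z(\phi))$. Then for a $C^2$ perturbation $h: [0,2\pi]\to\mathbb{R}^2$, the first-order (Gâteaux) derivative of $G$ at $z$ in direction $h$ is $G'(z)h = \frac{1}{|z_\phi|}\left((I-\nu\nu^\top)h_\phi^\perp\right)\cdot\nabla u(z) + \nu\cdot\left(\nabla\nabla^\top u(z)\,h\right)$, i.e., $\frac{d}{dt}\Big|_{t=0} G(z+th)(\phi)$ equals this expression for each $\phi$. -/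

import Mathlib

noncomputable section

/-- The rotation `(a,b) ↦ (b,-a)` on `ℝ²` (so that `ν = z_φ^⊥/|z_φ^⊥|` is the exterior
normal of a positively oriented curve). -/
def perp (v : EuclideanSpace ℝ (Fin 2)) : EuclideanSpace ℝ (Fin 2) :=
  (EuclideanSpace.equiv (Fin 2) ℝ).symm ![v 1, -v 0]

/-- The unit normal `ν = z_φ^⊥ / |z_φ^⊥|` of a parameterized plane curve `z` at `φ`. -/
def curveNormal (z : ℝ → EuclideanSpace ℝ (Fin 2)) (φ : ℝ) : EuclideanSpace ℝ (Fin 2) :=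
  ‖perp (deriv z φ)‖⁻¹ • perp (deriv z φ)

/-- First partial derivative `∂_i u` of `u : ℝ² → ℂ`. -/
def partial1 (u : EuclideanSpace ℝ (Fin 2) → ℂ) (x : EuclideanSpace ℝ (Fin 2)) (i : Fin 2) : ℂ :=
  fderiv ℝ u x (EuclideanSpace.single i 1)

/-- Second partial derivative `∂_i ∂_j u` of `u : ℝ² → ℂ` (Hessian entry). -/
def partial2 (u : EuclideanSpace ℝ (Fin 2) → ℂ) (x : EuclideanSpace ℝ (Fin 2)) (i j : Fin 2) : ℂ :=
  fderiv ℝ (fun y => fderiv ℝ u y (EuclideanSpace.single j 1)) x (EuclideanSpace.single i 1)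

/-- The boundary operator `G(z)(φ) = ν(φ)·∇u(z(φ))` for a plane curve `z`. -/
def bdryOp (u : EuclideanSpace ℝ (Fin 2) → ℂ) (z : ℝ → EuclideanSpace ℝ (Fin 2)) (φ : ℝ) : ℂ :=
  ∑ i : Fin 2, ((curveNormal z φ i : ℝ) : ℂ) * partial1 u (z φ) i

/-! Since `perp` is linear, the normal of the perturbed curve is the normalisation of the line
`t ↦ z_φ^⊥ + t h_φ^⊥`, so `G(z + th)(φ) = ∑ᵢ νₜ,ᵢ ∂ᵢu(z(φ) + t h(φ))` and the product rule applies.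
Differentiating `v ↦ v / ‖v‖` produces the tangential projection `(I - ννᵀ) v' / ‖v‖`, with
`‖z_φ^⊥‖ = ‖z_φ‖`; differentiating `∂ᵢu` along the line gives `∑ⱼ ∂ⱼ∂ᵢu hⱼ`, which is the Hessian
row `∑ⱼ ∂ᵢ∂ⱼu hⱼ` because second derivatives of a `C²` function commute. -/

open scoped RealInnerProductSpace

section UnitNormal

variable {E : Type*} [NormedAddCommGroup E] [InnerProductSpace ℝ E] {γ : ℝ → E} {γ' : E} {t : ℝ}

theorem HasDerivAt.norm (hγ : HasDerivAt γ γ' t) (h0 : γ t ≠ 0) :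
    HasDerivAt (fun s => ‖γ s‖) (⟪γ t, γ'⟫ / ‖γ t‖) t := by
  have hsq : ‖γ t‖ ^ 2 ≠ 0 := by positivity
  convert hγ.norm_sq.sqrt hsq using 1
  · simp [Real.sqrt_sq (norm_nonneg _)]
  · rw [Real.sqrt_sq (norm_nonneg _)]; ring

theorem HasDerivAt.norm_inv_smul (hγ : HasDerivAt γ γ' t) (h0 : γ t ≠ 0) :
    HasDerivAt (fun s => ‖γ s‖⁻¹ • γ s)
      (‖γ t‖⁻¹ • (γ' - ⟪‖γ t‖⁻¹ • γ t, γ'⟫ • ‖γ t‖⁻¹ • γ t)) t := by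
  refine (((hγ.norm h0).inv (norm_ne_zero_iff.mpr h0)).smul hγ).congr_deriv ?_
  rw [real_inner_smul_left]
  module

end UnitNormal

theorem perp_add_smul (a b : EuclideanSpace ℝ (Fin 2)) (t : ℝ) :
    perp (a + t • b) = perp a + t • perp b := by
  ext i
  fin_cases i <;> simp [perp]; ring

theorem norm_perp (v : EuclideanSpace ℝ (Fin 2)) : ‖perp v‖ = ‖v‖ := by
  simp [EuclideanSpace.norm_eq, perp, Fin.sum_univ_two, add_comm]

section CurveNormal

variable {z h : ℝ → EuclideanSpace ℝ (Fin 2)} {φ : ℝ}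

theorem curveNormal_add_smul (hz : DifferentiableAt ℝ z φ) (hh : DifferentiableAt ℝ h φ) (t : ℝ) :
    curveNormal (fun s => z s + t • h s) φ =
      ‖perp (deriv z φ) + t • perp (deriv h φ)‖⁻¹ • (perp (deriv z φ) + t • perp (deriv h φ)) := by
  have hderiv : deriv (fun s => z s + t • h s) φ = deriv z φ + t • deriv h φ :=
    (hz.hasDerivAt.add (hh.hasDerivAt.const_smul t)).deriv
  rw [curveNormal, hderiv, perp_add_smul]

theorem hasDerivAt_curveNormal_add_smul (hz : DifferentiableAt ℝ z φ)
    (hh : DifferentiableAt ℝ h φ) (hz' : deriv z φ ≠ 0) :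
    HasDerivAt (fun t : ℝ => curveNormal (fun s => z s + t • h s) φ)
      (‖deriv z φ‖⁻¹ •
        (perp (deriv h φ) - ⟪curveNormal z φ, perp (deriv h φ)⟫ • curveNormal z φ)) 0 := by
  have hline : HasDerivAt (fun t : ℝ => perp (deriv z φ) + t • perp (deriv h φ))
      (perp (deriv h φ)) 0 := by
    simpa using ((hasDerivAt_id (0 : ℝ)).smul_const (perp (deriv h φ))).const_add (perp (deriv z φ))
  have hA : perp (deriv z φ) + (0 : ℝ) • perp (deriv h φ) ≠ 0 := by
    rw [zero_smul, add_zero, ← norm_ne_zero_iff, norm_perp]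
    exact norm_ne_zero_iff.mpr hz'
  simp_rw [curveNormal_add_smul hz hh]
  simpa [curveNormal, norm_perp] using hline.norm_inv_smul hA

end CurveNormal

theorem hasDerivAt_comp_add_smul {ι F : Type*} [Fintype ι] [DecidableEq ι] [NormedAddCommGroup F]
    [NormedSpace ℝ F] {f : EuclideanSpace ℝ ι → F} {x : EuclideanSpace ℝ ι}
    (hf : DifferentiableAt ℝ f x) (v : EuclideanSpace ℝ ι) :
    HasDerivAt (fun t : ℝ => f (x + t • v))
      (∑ j, v j • fderiv ℝ f x (EuclideanSpace.single j 1)) 0 := by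
  have hline : HasDerivAt (fun t : ℝ => x + t • v) v 0 := by
    simpa using ((hasDerivAt_id (0 : ℝ)).smul_const v).const_add x
  have hv : ∑ j, v j • EuclideanSpace.single j (1 : ℝ) = v := by
    simpa [EuclideanSpace.basisFun_apply] using (EuclideanSpace.basisFun ι ℝ).sum_repr v
  refine (hf.hasFDerivAt.comp_hasDerivAt_of_eq 0 hline (by simp)).congr_deriv ?_
  conv_lhs => rw [← hv]
  simp [map_sum, map_smul]

theorem ContDiffAt.differentiableAt_fderiv {𝕜 E F : Type*} [NontriviallyNormedField 𝕜]
    [NormedAddCommGroup E] [NormedSpace 𝕜 E] [NormedAddCommGroup F] [NormedSpace 𝕜 F]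
    {f : E → F} {x : E} (hf : ContDiffAt 𝕜 2 f x) : DifferentiableAt 𝕜 (fderiv 𝕜 f) x :=
  (hf.fderiv_right (m := 1) le_rfl).differentiableAt one_ne_zero

section Partials

variable {u : EuclideanSpace ℝ (Fin 2) → ℂ} {x : EuclideanSpace ℝ (Fin 2)}

theorem partial2_eq_fderiv_fderiv (hu : DifferentiableAt ℝ (fderiv ℝ u) x) (i j : Fin 2) :
    partial2 u x i j =
      fderiv ℝ (fderiv ℝ u) x (EuclideanSpace.single i 1) (EuclideanSpace.single j 1) := by
  have hj : HasFDerivAt (fun y => fderiv ℝ u y (EuclideanSpace.single j 1))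
      ((ContinuousLinearMap.apply ℝ ℂ (EuclideanSpace.single j (1 : ℝ))).comp
        (fderiv ℝ (fderiv ℝ u) x)) x :=
    (ContinuousLinearMap.apply ℝ ℂ (EuclideanSpace.single j (1 : ℝ))).hasFDerivAt.comp x
      hu.hasFDerivAt
  rw [partial2, hj.fderiv]
  rfl

theorem partial2_comm (hu : ContDiffAt ℝ 2 u x) (i j : Fin 2) :
    partial2 u x i j = partial2 u x j i := by
  rw [partial2_eq_fderiv_fderiv hu.differentiableAt_fderiv,
    partial2_eq_fderiv_fderiv hu.differentiableAt_fderiv]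
  exact hu.isSymmSndFDerivAt (by simp) _ _

theorem hasDerivAt_partial1_add_smul (hu : ContDiffAt ℝ 2 u x) (v : EuclideanSpace ℝ (Fin 2))
    (i : Fin 2) :
    HasDerivAt (fun t : ℝ => partial1 u (x + t • v) i)
      (∑ j, partial2 u x i j * ((v j : ℝ) : ℂ)) 0 := by
  have hdiff : DifferentiableAt ℝ (fun y => partial1 u y i) x :=
    (ContinuousLinearMap.apply ℝ ℂ (EuclideanSpace.single i (1 : ℝ))).differentiableAt.comp x
      hu.differentiableAt_fderiv
  refine (hasDerivAt_comp_add_smul hdiff v).congr_deriv (Finset.sum_congr rfl fun j _ => ?_)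
  rw [partial2_comm hu, Complex.real_smul, mul_comm]
  rfl

end Partials

/-- Theorem 3.1 of the paper: for a `C²` plane curve `z` with `z_φ ≠ 0`,
`ν = z_φ^⊥/|z_φ^⊥|`, a `C²` function `u : ℝ² → ℂ`, `G(z)(φ) = ν·∇u(z(φ))`, and a `C²`
perturbation `h`, the Gâteaux derivative `d/dt|_{t=0} G(z+th)(φ)` equals
`(1/|z_φ|)((I-ννᵀ)h_φ^⊥)·∇u(z) + ν·(∇∇ᵀu(z) h)` at each `φ`. -/
theorem boundary_operator_gateaux_deriv_2D
    (z h : ℝ → EuclideanSpace ℝ (Fin 2)) (hz : ContDiff ℝ 2 z) (hh : ContDiff ℝ 2 h)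
    (hz' : ∀ φ : ℝ, deriv z φ ≠ 0)
    (u : EuclideanSpace ℝ (Fin 2) → ℂ) (hu : ContDiff ℝ 2 u) (φ : ℝ) :
    HasDerivAt (fun t : ℝ => bdryOp u (fun s => z s + t • h s) φ)
      ((∑ i : Fin 2,
          (((‖deriv z φ‖⁻¹ •
                (perp (deriv h φ) -
                  (inner ℝ (curveNormal z φ) (perp (deriv h φ)) : ℝ) • curveNormal z φ)) i : ℝ) : ℂ) *
            partial1 u (z φ) i) +
        ∑ i : Fin 2, ((curveNormal z φ i : ℝ) : ℂ) *
          ∑ j : Fin 2, partial2 u (z φ) i j * ((h φ j : ℝ) : ℂ)) 0 := by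
  have hν := hasDerivAt_curveNormal_add_smul (hz.differentiable two_ne_zero φ)
    (hh.differentiable two_ne_zero φ) (hz' φ)
  refine (HasDerivAt.fun_sum fun i _ =>
    ((EuclideanSpace.proj (𝕜 := ℝ) i).hasFDerivAt.comp_hasDerivAt 0 hν).ofReal_comp.fun_mul
      (hasDerivAt_partial1_add_smul hu.contDiffAt (h φ) i)).congr_deriv ?_
  simp [Finset.sum_add_distrib]
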